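/- arXiv:1703.00236 — 3 statements merged into one kernel-verified Lean document; each statement's English description precedes it below -/
import Mathlib

section
/- For every finite simple graph G, if there are k cliques of G whose union covers every edge of G (an edge clique cover of size k), then G admits a very strong rainbow coloring with at most k colors, i.e., vsrc(G) ≤ ecc(G). -/
open SimpleGraph

/-- A very strong rainbow coloring: for every shortest path (a path whose length equals the
distance between its endpoints), all edges receive pairwise distinct colors. -/
def IsVSRC {V : Type*} (G : SimpleGraph V) (c : Sym2 V → ℕ) : Prop :=
  ∀ (u v : V) (p : G.Walk u v), p.IsPath → p.length = G.dist u v →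
    (p.edges.map c).Nodup

/-!
Colour each edge by the index of some clique of the cover containing it. If two edges
`s(x₀, x₁)` and `s(y₀, y₁)` of a shortest path, in this order, got the same colour, they would
lie in a common clique, so `x₀` and `y₁` would be equal or adjacent. The path could then be
shortcut from `x₀` to `y₁`, contradicting minimality of its length.
-/

namespace SimpleGraph

variable {V : Type*} {G : SimpleGraph V}

theorem Walk.sub_le_dist_getVert {u v : V} {p : G.Walk u v} (hp : p.length = G.dist u v)
    {i j : ℕ} (hj : j ≤ p.length) : j - i ≤ G.dist (p.getVert i) (p.getVert j) := by
  have hr : G.Reachable (p.getVert i) (p.getVert j) := ⟨(p.take i).reverse.append (p.take j)⟩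
  obtain ⟨q, hq⟩ := hr.exists_walk_length_eq_dist
  have := G.dist_le ((p.take i).append (q.append (p.drop j)))
  simp only [Walk.length_append, Walk.take_length, Walk.drop_length] at this
  omega

theorem dist_le_one_of_isClique {s : Set V} (hs : G.IsClique s) {x y : V} (hx : x ∈ s)
    (hy : y ∈ s) : G.dist x y ≤ 1 := by
  rcases eq_or_ne x y with rfl | hxy
  · simp
  · exact (dist_eq_one_iff_adj.mpr (hs hx hy hxy)).le

end SimpleGraph

theorem isVSRC_of_isClique_colorClass {V : Type*} {G : SimpleGraph V} {c : Sym2 V → ℕ}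
    (hc : ∀ n, G.IsClique {x | ∃ e ∈ G.edgeSet, c e = n ∧ x ∈ e}) : IsVSRC G c := by
  intro u v p _ hp
  refine List.pairwise_iff_getElem.mpr fun i j hi hj hij hcol => ?_
  simp only [List.length_map, List.getElem_map] at hi hj hcol
  have hlen : p.edges.length = p.length := p.length_edges
  have hedge (n : ℕ) (hn : n < p.edges.length) : p.edges[n] ∈ G.edgeSet :=
    p.edges_subset_edgeSet (List.getElem_mem hn)
  have hshort := dist_le_one_of_isClique (hc (c p.edges[i]))
    (x := p.getVert i) (y := p.getVert (j + 1))
    ⟨_, hedge i hi, rfl, by simp [Walk.getElem_edges]⟩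
    ⟨_, hedge j hj, hcol.symm, by simp [Walk.getElem_edges]⟩
  have hlong := Walk.sub_le_dist_getVert (i := i) (j := j + 1) hp (by omega)
  omega

theorem stmt_2_general {V : Type*} (G : SimpleGraph V) (k : ℕ)
    (S : Fin k → Set V) (hS : ∀ i, G.IsClique (S i))
    (hcov : ∀ u v : V, G.Adj u v → ∃ i, u ∈ S i ∧ v ∈ S i) :
    ∃ c : Sym2 V → ℕ, IsVSRC G c ∧ ∀ e ∈ G.edgeSet, c e < k := by
  classical
  have hcovered : ∀ e : G.edgeSet, ∃ i, ∀ x ∈ (e : Sym2 V), x ∈ S i := by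
    rintro ⟨e, he⟩
    induction e using Sym2.ind with
    | _ u v =>
      obtain ⟨i, hu, hv⟩ := hcov u v he
      exact ⟨i, by simp [hu, hv]⟩
  choose f hf using hcovered
  let c : Sym2 V → ℕ := fun e => if he : e ∈ G.edgeSet then f ⟨e, he⟩ else 0
  refine ⟨c, isVSRC_of_isClique_colorClass fun n => ?_, fun e he => by simp [c, he]⟩
  by_cases hn : n < k
  · refine (hS ⟨n, hn⟩).subset ?_
    rintro x ⟨e, he, rfl, hx⟩
    simpa [c, he] using hf ⟨e, he⟩ x hx
  · refine isClique_empty.subset ?_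
    rintro x ⟨e, he, rfl, -⟩
    simp [c, he] at hn

theorem stmt_2 {V : Type*} [Fintype V] (G : SimpleGraph V) (k : ℕ)
    (S : Fin k → Set V) (hS : ∀ i, G.IsClique (S i))
    (hcov : ∀ u v : V, G.Adj u v → ∃ i, u ∈ S i ∧ v ∈ S i) :
    ∃ c : Sym2 V → ℕ, IsVSRC G c ∧ ∀ e ∈ G.edgeSet, c e < k :=
  stmt_2_general G k S hS hcov
end

section
/- Let G be a finite connected cactus graph and let c be a very strong rainbow coloring of G. Let C1 and C2 be two cycles of even length in G with distinct edge sets, let e1 be an edge of C1, and let e2 be an edge of C2. Then c(e1) ≠ c(e2). -/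
open SimpleGraph

/-- A cactus graph: every edge belongs to at most one cycle, i.e. any two cycles sharing an
edge have the same edge set. -/
def IsCactus {V : Type*} (G : SimpleGraph V) : Prop :=
  ∀ (u v : V) (p : G.Walk u u) (q : G.Walk v v), p.IsCycle → q.IsCycle →
    (∃ e, e ∈ p.edges ∧ e ∈ q.edges) → ∀ e, e ∈ p.edges ↔ e ∈ q.edges

/-!
Let `e₁ = a₁b₁` and `e₂ = a₂b₂`, oriented so that `D = d(a₁, b₂)` is the largest of the four
distances between their endpoints. In a cactus the endpoints of an edge on an even cycle are
never equidistant from a vertex: a closest vertex `z` with `d(z, x) = d(z, y)` would close,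
with two geodesics and the edge `xy`, an odd cycle through `xy`, while in a cactus every cycle
through `xy` has the edge set, hence the length, of the even one. Hence `d(a₁, a₂) = d(b₁, b₂) = D - 1` and `d(b₁, a₂) ∈ {D - 2, D}`. If it is
`D - 2`, then `a₁ b₁ ⋯ a₂ b₂` is a shortest path through both edges, so their colors differ.
If it is `D`, geodesics `a₁ → a₂` and `b₁ → b₂` are disjoint and close, with both edges, a
cycle through `e₁` and `e₂`, impossible in a cactus since the edge sets of `C₁` and `C₂` are
distinct, hence disjoint.
-/

section

variable {V : Type*} {G : SimpleGraph V}

namespace SimpleGraph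

theorem Walk.dist_add_dist_of_mem_support {u v w : V} (p : G.Walk u v)
    (hp : p.length = G.dist u v) (hw : w ∈ p.support) :
    G.dist u w + G.dist w v = G.dist u v := by
  classical
  rw [← hp, ← length_eq_dist_of_subwalk hp (p.isSubwalk_takeUntil hw),
    ← length_eq_dist_of_subwalk hp (p.isSubwalk_dropUntil hw), ← length_append, take_spec]

theorem Walk.IsPath.append {u v w : V} {p : G.Walk u v} {q : G.Walk v w}
    (hp : p.IsPath) (hq : q.IsPath) (hpq : ∀ x ∈ p.support, x ∈ q.support → x = v) :
    (p.append q).IsPath := by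
  rw [isPath_def, support_append, List.nodup_append]
  refine ⟨hp.support_nodup, (q.cons_tail_support ▸ hq.support_nodup).of_cons, ?_⟩
  rintro x hxp _ hxq rfl
  have hxv := hpq x hxp (List.mem_of_mem_tail hxq)
  subst hxv
  exact (q.cons_tail_support ▸ hq.support_nodup).notMem hxq

theorem Walk.IsTrail.length_eq_of_mem_edges_iff {u v u' v' : V} {p : G.Walk u v}
    {q : G.Walk u' v'} (hp : p.IsTrail) (hq : q.IsTrail)
    (hpq : ∀ e, e ∈ p.edges ↔ e ∈ q.edges) : p.length = q.length := by
  rw [← p.length_edges, ← q.length_edges]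
  exact ((List.perm_ext_iff_of_nodup hp.edges_nodup hq.edges_nodup).2 hpq).length_eq

theorem Walk.isCycle_cons_reverse_append {x y z : V} (hxy : G.Adj x y) {p : G.Walk z x}
    {q : G.Walk z y} (hp : p.IsPath) (hq : q.IsPath)
    (hpq : ∀ v ∈ p.support, v ∈ q.support → v = z)
    (hxq : x ∉ q.support) (hyp : y ∉ p.support) :
    (cons hxy (q.reverse.append p)).IsCycle := by
  rw [cons_isCycle_iff]
  refine ⟨hq.reverse.append hp fun v hvq hvp => hpq v hvp (by simpa using hvq), fun hxy' => ?_⟩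
  rw [edges_append, List.mem_append, edges_reverse, List.mem_reverse] at hxy'
  rcases hxy' with h | h
  · exact hxq (q.fst_mem_support_of_mem_edges h)
  · exact hyp (p.snd_mem_support_of_mem_edges h)

/-- For the closest vertex `z` equidistant from `x` and `y`, the geodesics from `z` to `x` and
to `y` meet only at `z`. -/
theorem exists_odd_isCycle_of_dist_eq (hconn : G.Connected) {x y : V} (hxy : G.Adj x y)
    (z : V) (hz : G.dist z x = G.dist z y) :
    ∃ C : G.Walk x x, C.IsCycle ∧ s(x, y) ∈ C.edges ∧ Odd C.length := by
  induction hn : G.dist z x using Nat.strong_induction_on generalizing z with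
  | _ n ih =>
  obtain ⟨p, hpp, hp⟩ := hconn.exists_path_of_dist z x
  obtain ⟨q, hqp, hq⟩ := hconn.exists_path_of_dist z y
  by_cases hmeet : ∃ v ∈ p.support, v ∈ q.support ∧ v ≠ z
  · obtain ⟨v, hvp, hvq, hvz⟩ := hmeet
    have hpv := p.dist_add_dist_of_mem_support hp hvp
    have hqv := q.dist_add_dist_of_mem_support hq hvq
    have hzv := hconn.pos_dist_of_ne hvz.symm
    exact ih (G.dist v x) (by omega) v (by omega) rfl
  push Not at hmeet
  have hxy₁ : G.dist x y = 1 := dist_eq_one_iff_adj.2 hxy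
  have hyx₁ : G.dist y x = 1 := dist_eq_one_iff_adj.2 hxy.symm
  have hxq : x ∉ q.support := fun hx => by
    have := q.dist_add_dist_of_mem_support hq hx
    omega
  have hyp : y ∉ p.support := fun hy => by
    have := p.dist_add_dist_of_mem_support hp hy
    omega
  refine ⟨_, p.isCycle_cons_reverse_append hxy hpp hqp hmeet hxq hyp, by simp, ?_⟩
  simp only [Walk.length_cons, Walk.length_append, Walk.length_reverse, hp, hq, ← hz]
  exact ⟨G.dist z x, by ring⟩

/-- Geodesics `a₁ → a₂` and `b₁ → b₂` are vertex-disjoint. -/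
theorem exists_isCycle_of_dist_add_dist_lt (hconn : G.Connected) {a₁ b₁ a₂ b₂ : V}
    (h₁ : G.Adj a₁ b₁) (h₂ : G.Adj a₂ b₂) (hb : b₁ ≠ b₂)
    (hlt : G.dist a₁ a₂ + G.dist b₁ b₂ < G.dist a₁ b₂ + G.dist b₁ a₂) :
    ∃ C : G.Walk a₁ a₁, C.IsCycle ∧ s(a₁, b₁) ∈ C.edges ∧ s(a₂, b₂) ∈ C.edges := by
  obtain ⟨p, hpp, hp⟩ := hconn.exists_path_of_dist a₁ a₂
  obtain ⟨q, hqp, hq⟩ := hconn.exists_path_of_dist b₁ b₂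
  have hdisj : ∀ v ∈ p.support, v ∉ q.support := fun v hvp hvq => by
    have := p.dist_add_dist_of_mem_support hp hvp
    have := q.dist_add_dist_of_mem_support hq hvq
    have := hconn.dist_triangle (u := a₁) (v := v) (w := b₂)
    have := hconn.dist_triangle (u := b₁) (v := v) (w := a₂)
    have : G.dist b₁ v = G.dist v b₁ := dist_comm
    omega
  have hp' : (Walk.cons h₂.symm p.reverse).IsPath := by
    rw [Walk.cons_isPath_iff, Walk.support_reverse, List.mem_reverse]
    exact ⟨hpp.reverse, fun hb₂ => hdisj b₂ hb₂ q.end_mem_support⟩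
  refine ⟨_, Walk.isCycle_cons_reverse_append h₁ hp' hqp.reverse ?_ ?_ ?_, by simp, ?_⟩
  · intro v hvp hvq
    rw [Walk.support_cons, List.mem_cons, Walk.support_reverse, List.mem_reverse] at hvp
    rw [Walk.support_reverse, List.mem_reverse] at hvq
    exact hvp.resolve_right fun hvp => hdisj v hvp hvq
  · simpa using hdisj a₁ p.start_mem_support
  · simpa [hb] using fun hb₁ => hdisj b₁ hb₁ q.start_mem_support
  · simp [Sym2.eq_swap]

end SimpleGraph

theorem IsCactus.length_eq (hcactus : IsCactus G) {u v : V} {C : G.Walk u u} {D : G.Walk v v}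
    (hC : C.IsCycle) (hD : D.IsCycle) {e : Sym2 V} (heC : e ∈ C.edges) (heD : e ∈ D.edges) :
    C.length = D.length :=
  hC.isTrail.length_eq_of_mem_edges_iff hD.isTrail (hcactus u v C D hC hD ⟨e, heC, heD⟩)

theorem IsCactus.dist_ne_of_mem_edges (hconn : G.Connected) (hcactus : IsCactus G) {w : V}
    {C : G.Walk w w} (hC : C.IsCycle) (heven : Even C.length) {x y : V}
    (hxy : s(x, y) ∈ C.edges) (z : V) : G.dist z x ≠ G.dist z y := by
  intro hz
  obtain ⟨D, hD, hxyD, hodd⟩ :=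
    exists_odd_isCycle_of_dist_eq hconn (C.adj_of_mem_edges hxy) z hz
  rw [hcactus.length_eq hD hC hxyD hxy] at hodd
  exact Nat.not_odd_iff_even.2 heven hodd

theorem IsVSRC.apply_ne_of_dist_add_two {c : Sym2 V → ℕ} (hc : IsVSRC G c)
    (hconn : G.Connected) {a₁ b₁ a₂ b₂ : V} (h₁ : G.Adj a₁ b₁) (h₂ : G.Adj a₂ b₂)
    (hd : G.dist b₁ a₂ + 2 = G.dist a₁ b₂) :
    c s(a₁, b₁) ≠ c s(a₂, b₂) := by
  obtain ⟨g, hg⟩ := hconn.exists_walk_length_eq_dist b₁ a₂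
  let W := Walk.cons h₁ (g.append (Walk.cons h₂ Walk.nil))
  have hW : W.length = G.dist a₁ b₂ := by simp [W, hg, ← hd]
  have hnodup := hc a₁ b₂ W (W.isPath_of_length_eq_dist hW) hW
  intro hceq
  simp [W, hceq] at hnodup

theorem IsVSRC.apply_ne_of_even_cycles_of_dist_le {c : Sym2 V → ℕ} (hc : IsVSRC G c)
    (hconn : G.Connected) (hcactus : IsCactus G) {w₁ w₂ : V} {C₁ : G.Walk w₁ w₁}
    {C₂ : G.Walk w₂ w₂} (hC₁ : C₁.IsCycle) (hC₂ : C₂.IsCycle) (heven₁ : Even C₁.length)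
    (heven₂ : Even C₂.length) (hdisj : ∀ e ∈ C₁.edges, e ∉ C₂.edges) {a₁ b₁ a₂ b₂ : V}
    (he₁ : s(a₁, b₁) ∈ C₁.edges) (he₂ : s(a₂, b₂) ∈ C₂.edges)
    (haa : G.dist a₁ a₂ ≤ G.dist a₁ b₂) (hbb : G.dist b₁ b₂ ≤ G.dist a₁ b₂) :
    c s(a₁, b₁) ≠ c s(a₂, b₂) := by
  have h₁ : G.Adj a₁ b₁ := C₁.adj_of_mem_edges he₁
  have h₂ : G.Adj a₂ b₂ := C₂.adj_of_mem_edges he₂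
  have hne₁ := hcactus.dist_ne_of_mem_edges hconn hC₁ heven₁ he₁ b₂
  have hne₂ := hcactus.dist_ne_of_mem_edges hconn hC₂ heven₂ he₂ a₁
  have hne₃ := hcactus.dist_ne_of_mem_edges hconn hC₂ heven₂ he₂ b₁
  have := hconn.dist_triangle (u := a₁) (v := b₁) (w := b₂)
  have := hconn.dist_triangle (u := a₁) (v := a₂) (w := b₂)
  have := hconn.dist_triangle (u := b₁) (v := a₂) (w := b₂)
  have := hconn.dist_triangle (u := b₁) (v := b₂) (w := a₂)
  have : G.dist a₁ b₁ = 1 := dist_eq_one_iff_adj.2 h₁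
  have : G.dist a₂ b₂ = 1 := dist_eq_one_iff_adj.2 h₂
  have : G.dist b₂ a₂ = 1 := dist_eq_one_iff_adj.2 h₂.symm
  have : G.dist b₂ a₁ = G.dist a₁ b₂ := dist_comm
  have : G.dist b₂ b₁ = G.dist b₁ b₂ := dist_comm
  have hcases : G.dist b₁ a₂ + 2 = G.dist a₁ b₂ ∨
      G.dist a₁ a₂ + G.dist b₁ b₂ < G.dist a₁ b₂ + G.dist b₁ a₂ := by omega
  rcases hcases with hnear | hfar
  · exact hc.apply_ne_of_dist_add_two hconn h₁ h₂ hnear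
  have hab : G.dist a₁ a₂ = G.dist b₁ b₂ := by omega
  have hb : b₁ ≠ b₂ := by
    rintro rfl
    have ha : a₁ = a₂ := hconn.dist_eq_zero_iff.1 (hab.trans dist_self)
    subst ha
    exact (hdisj _ he₁ he₂).elim
  obtain ⟨Z, hZ, he₁Z, he₂Z⟩ := exists_isCycle_of_dist_add_dist_lt hconn h₁ h₂ hb hfar
  exact (hdisj _ ((hcactus a₁ w₁ Z C₁ hZ hC₁ ⟨_, he₁Z, he₁⟩ _).1 he₂Z) he₂).elim

theorem IsVSRC.apply_ne_of_even_cycles {c : Sym2 V → ℕ} (hc : IsVSRC G c)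
    (hconn : G.Connected) (hcactus : IsCactus G) {w₁ w₂ : V} {C₁ : G.Walk w₁ w₁}
    {C₂ : G.Walk w₂ w₂} (hC₁ : C₁.IsCycle) (hC₂ : C₂.IsCycle) (heven₁ : Even C₁.length)
    (heven₂ : Even C₂.length) (hdisj : ∀ e ∈ C₁.edges, e ∉ C₂.edges) {e₁ e₂ : Sym2 V}
    (he₁ : e₁ ∈ C₁.edges) (he₂ : e₂ ∈ C₂.edges) : c e₁ ≠ c e₂ := by
  have key := fun {a₁ b₁ a₂ b₂ : V} =>
    hc.apply_ne_of_even_cycles_of_dist_le (a₁ := a₁) (b₁ := b₁) (a₂ := a₂) (b₂ := b₂)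
      hconn hcactus hC₁ hC₂ heven₁ heven₂ hdisj
  induction e₁ using Sym2.ind with | _ a₁ b₁ => ?_
  induction e₂ using Sym2.ind with | _ a₂ b₂ => ?_
  have he₁' : s(b₁, a₁) ∈ C₁.edges := Sym2.eq_swap ▸ he₁
  have he₂' : s(b₂, a₂) ∈ C₂.edges := Sym2.eq_swap ▸ he₂
  rcases (by omega : (G.dist a₁ a₂ ≤ G.dist a₁ b₂ ∧ G.dist b₁ b₂ ≤ G.dist a₁ b₂) ∨
      (G.dist a₁ b₂ ≤ G.dist a₁ a₂ ∧ G.dist b₁ a₂ ≤ G.dist a₁ a₂) ∨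
      (G.dist b₁ a₂ ≤ G.dist b₁ b₂ ∧ G.dist a₁ b₂ ≤ G.dist b₁ b₂) ∨
      (G.dist b₁ b₂ ≤ G.dist b₁ a₂ ∧ G.dist a₁ a₂ ≤ G.dist b₁ a₂))
    with ⟨h, h'⟩ | ⟨h, h'⟩ | ⟨h, h'⟩ | ⟨h, h'⟩
  · exact key he₁ he₂ h h'
  · rw [Sym2.eq_swap (a := a₂)]
    exact key he₁ he₂' h h'
  · rw [Sym2.eq_swap (a := a₁)]
    exact key he₁' he₂ h h'
  · rw [Sym2.eq_swap (a := a₁), Sym2.eq_swap (a := a₂)]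
    exact key he₁' he₂' h h'

end

theorem stmt_18_general {V : Type*} (G : SimpleGraph V)
    (hconn : G.Connected) (hcactus : IsCactus G)
    (c : Sym2 V → ℕ) (hc : IsVSRC G c)
    (w₁ w₂ : V) (C₁ : G.Walk w₁ w₁) (C₂ : G.Walk w₂ w₂)
    (hC₁ : C₁.IsCycle) (hC₂ : C₂.IsCycle)
    (heven₁ : Even C₁.length) (heven₂ : Even C₂.length)
    (hdistinct : {e : Sym2 V | e ∈ C₁.edges} ≠ {e : Sym2 V | e ∈ C₂.edges})
    (e₁ e₂ : Sym2 V) (he₁ : e₁ ∈ C₁.edges) (he₂ : e₂ ∈ C₂.edges) :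
    c e₁ ≠ c e₂ := by
  have hdisj : ∀ e ∈ C₁.edges, e ∉ C₂.edges := fun e he he' =>
    hdistinct (Set.ext (hcactus w₁ w₂ C₁ C₂ hC₁ hC₂ ⟨e, he, he'⟩))
  exact hc.apply_ne_of_even_cycles hconn hcactus hC₁ hC₂ heven₁ heven₂ hdisj he₁ he₂

theorem stmt_18 {V : Type*} [Fintype V] (G : SimpleGraph V)
    (hconn : G.Connected) (hcactus : IsCactus G)
    (c : Sym2 V → ℕ) (hc : IsVSRC G c)
    (w₁ w₂ : V) (C₁ : G.Walk w₁ w₁) (C₂ : G.Walk w₂ w₂)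
    (hC₁ : C₁.IsCycle) (hC₂ : C₂.IsCycle)
    (heven₁ : Even C₁.length) (heven₂ : Even C₂.length)
    (hdistinct : {e : Sym2 V | e ∈ C₁.edges} ≠ {e : Sym2 V | e ∈ C₂.edges})
    (e₁ e₂ : Sym2 V) (he₁ : e₁ ∈ C₁.edges) (he₂ : e₂ ∈ C₂.edges) :
    c e₁ ≠ c e₂ :=
  stmt_18_general G hconn hcactus c hc w₁ w₂ C₁ C₂ hC₁ hC₂ heven₁ heven₂ hdistinct e₁ e₂ he₁ he₂
end

section
/- Let G be a finite connected cactus graph, let C be a cycle of odd length in G, and let e1 = uv be an edge of C. Let w = vopp(e1) be the unique vertex of C equidistant in G from u and v, and let e2 be any edge of G both of whose endpoints lie in S(w,C), the set of vertices reachable from w in the graph obtained from G by deleting all edges of C. Then e1 and e2 are not conflicting: no shortest path in G (a path whose length equals the distance between its endpoints) contains both e1 and e2. -/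
open SimpleGraph

/-!
In a cactus, a vertex `w` of the cycle `C` separates `S(w, C)` from the rest of `C`: a path
leaving `C` at one vertex and returning at another would close, with an arc of `C`, a second
cycle sharing an edge with `C` but not contained in it. So a shortest path through `e₂` and
`uv` passes through `w`. Along a shortest path the distance between two of its vertices is the
difference of their positions, so the distances from `w` to the two ends of an edge of the path
differ by one, contradicting `d(w, u) = d(w, v)`.
-/

namespace SimpleGraph.Walk

variable {V : Type*} {G : SimpleGraph V} {a b : V}

theorem dist_getVert_getVert_of_length_eq_dist {q : G.Walk a b} (hq : q.length = G.dist a b)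
    {i j : ℕ} (hij : i ≤ j) (hj : j ≤ q.length) :
    G.dist (q.getVert i) (q.getVert j) = j - i := by
  have hsub : ((q.drop i).take (j - i)).IsSubwalk q :=
    (isSubwalk_take _ _).trans (isSubwalk_drop _ _)
  have h := length_eq_dist_of_subwalk hq hsub
  rw [take_length, drop_length, drop_getVert, Nat.add_sub_cancel' hij] at h
  omega

theorem dist_ne_dist_of_length_eq_dist {q : G.Walk a b} (hq : q.length = G.dist a b) {w u v : V}
    (hw : w ∈ q.support) (huv : s(u, v) ∈ q.edges) : G.dist w u ≠ G.dist w v := by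
  obtain ⟨m, rfl, hm⟩ := mem_support_iff_exists_getVert.mp hw
  obtain ⟨k, hk, hkuv⟩ := q.mk_mem_edges_iff_exists.mp huv
  have hdist : ∀ i ≤ q.length, G.dist (q.getVert m) (q.getVert i) = max m i - min m i := by
    intro i hi
    rcases le_total m i with h | h
    · rw [dist_getVert_getVert_of_length_eq_dist hq h hi]
      omega
    · rw [dist_comm, dist_getVert_getVert_of_length_eq_dist hq h hm]
      omega
  rcases Sym2.eq_iff.mp hkuv with ⟨rfl, rfl⟩ | ⟨rfl, rfl⟩ <;>
    rw [hdist k hk.le, hdist (k + 1) hk] <;> omega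

theorem IsPath.start_notMem_support_tail {p : G.Walk a b} (hp : p.IsPath) :
    a ∉ p.support.tail := by
  have h := hp.support_nodup
  rw [← cons_tail_support, List.nodup_cons] at h
  exact h.1

theorem mk_mem_edges_of_length_eq_one {p : G.Walk a b} (hp : p.length = 1) :
    s(a, b) ∈ p.edges := by
  cases p with
  | nil => simp at hp
  | cons h p' => cases p' with
    | nil => simp
    | cons => simp at hp

theorem IsCycle.exists_isPath_of_mem_support {w₀ : V} {C : G.Walk w₀ w₀} (hC : C.IsCycle)
    (ha : a ∈ C.support) (hb : b ∈ C.support) (hab : a ≠ b) :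
    ∃ p : G.Walk a b, p.IsPath ∧ p.support ⊆ C.support ∧ p.edges ⊆ C.edges := by
  classical
  set C' := C.rotate a ha
  have hb' : b ∈ C'.support := (C.mem_support_rotate_iff a ha).mpr hb
  have hC' : (C'.takeUntil b hb').append (C'.dropUntil b hb') |>.IsCycle := by
    rw [take_spec]
    exact hC.rotate ha
  refine ⟨C'.takeUntil b hb', hC'.isPath_of_append_left (not_nil_of_ne hab.symm), ?_, ?_⟩
  · intro t ht
    exact (C.mem_support_rotate_iff a ha).mp (C'.support_takeUntil_subset_support hb' ht)
  · intro e he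
    exact (C.rotate_edges a ha).mem_iff.mp (C'.edges_takeUntil_subset_edges hb' he)

end SimpleGraph.Walk

namespace IsCactus

open SimpleGraph.Walk

variable {V : Type*} {G : SimpleGraph V} {w₀ : V} {C : G.Walk w₀ w₀}

theorem eq_of_isPath_of_notMem_edges (hG : IsCactus G) (hC : C.IsCycle) {x y : V}
    (hx : x ∈ C.support) (hy : y ∈ C.support) {p : G.Walk x y} (hp : p.IsPath)
    (hpC : ∀ e ∈ p.edges, e ∉ C.edges)
    (hinner : ∀ t ∈ p.support, t ∈ C.support → t = x ∨ t = y) : x = y := by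
  by_contra hxy
  obtain ⟨r, hr, hrC, hrE⟩ := hC.exists_isPath_of_mem_support hy hx (Ne.symm hxy)
  have hdisj : p.support.tail.Disjoint r.support.tail := by
    intro t htp htr
    rcases hinner t (List.mem_of_mem_tail htp) (hrC (List.mem_of_mem_tail htr)) with rfl | rfl
    · exact hp.start_notMem_support_tail htp
    · exact hr.start_notMem_support_tail htr
  have hlen : 1 < p.length ∨ 1 < r.length := by
    by_contra! hle
    have hp0 : p.length ≠ 0 := fun h => hxy (p.eq_of_length_eq_zero h)
    have hr0 : r.length ≠ 0 := fun h => hxy (r.eq_of_length_eq_zero h).symm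
    refine hpC _ (mk_mem_edges_of_length_eq_one (by omega : p.length = 1)) ?_
    rw [Sym2.eq_swap]
    exact hrE (mk_mem_edges_of_length_eq_one (by omega))
  have hD := hp.isCycle_append hr hdisj hlen
  obtain ⟨f, hf⟩ := List.exists_mem_of_ne_nil r.edges
    (edges_eq_nil.not.mpr (not_nil_of_ne (Ne.symm hxy)))
  obtain ⟨g, hg⟩ := List.exists_mem_of_ne_nil p.edges (edges_eq_nil.not.mpr (not_nil_of_ne hxy))
  have hsame := hG _ _ C (p.append r) hC hD ⟨f, hrE hf, by simp [hf]⟩ g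
  exact hpC g hg (hsame.mpr (by simp [hg]))

theorem eq_of_isPath_deleteEdges (hG : IsCactus G) (hC : C.IsCycle) {x y : V}
    (hx : x ∈ C.support) (hy : y ∈ C.support) {p : (G.deleteEdges {e | e ∈ C.edges}).Walk x y}
    (hp : p.IsPath) : x = y := by
  classical
  induction h : p.length using Nat.strong_induction_on generalizing y with
  | _ n ih =>
  by_cases! hmid : ∃ t ∈ p.support, t ∈ C.support ∧ t ≠ x ∧ t ≠ y
  · obtain ⟨t, ht, htC, htx, hty⟩ := hmid
    exact absurd (ih _ (h ▸ length_takeUntil_lt_length ht hty) htC (hp.takeUntil ht) rfl).symm htx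
  · refine hG.eq_of_isPath_of_notMem_edges hC hx hy (hp.mapLe (G.deleteEdges_le _)) ?_ ?_
    · rw [edges_mapLe_eq_edges]
      intro e he
      have he' := p.edges_subset_edgeSet he
      rw [edgeSet_deleteEdges] at he'
      exact he'.2
    · rw [support_mapLe_eq_support]
      intro t ht htC
      by_contra! htxy
      exact htxy.2 (hmid t ht htC htxy.1)

theorem eq_of_reachable_deleteEdges (hG : IsCactus G) (hC : C.IsCycle) {x y : V}
    (hx : x ∈ C.support) (hy : y ∈ C.support)
    (hxy : (G.deleteEdges {e | e ∈ C.edges}).Reachable x y) : x = y :=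
  have ⟨_, hp⟩ := hxy.exists_isPath
  hG.eq_of_isPath_deleteEdges hC hx hy hp

theorem mem_support_of_reachable_deleteEdges (hG : IsCactus G) (hC : C.IsCycle) {w x t : V}
    (hw : w ∈ C.support) (ht : t ∈ C.support) (htw : t ≠ w)
    (hx : (G.deleteEdges {e | e ∈ C.edges}).Reachable w x) (P : G.Walk x t) :
    w ∈ P.support := by
  induction P with
  | nil => exact absurd (hG.eq_of_reachable_deleteEdges hC hw ht hx).symm htw
  | @cons x y t hxy P ih =>
    by_cases hxyC : s(x, y) ∈ C.edges
    · rw [hG.eq_of_reachable_deleteEdges hC hw (C.fst_mem_support_of_mem_edges hxyC) hx]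
      exact start_mem_support _
    · exact List.mem_cons_of_mem _
        (ih ht htw (hx.trans (deleteEdges_adj.mpr ⟨hxy, hxyC⟩).reachable))

end IsCactus

theorem stmt_19_general {V : Type*} (G : SimpleGraph V)
    (hcactus : IsCactus G)
    (w₀ : V) (C : G.Walk w₀ w₀) (hC : C.IsCycle)
    (u v : V) (huv : s(u, v) ∈ C.edges)
    (w : V) (hw : w ∈ C.support) (hwdist : G.dist w u = G.dist w v)
    (e₂ : Sym2 V)
    (hend : ∀ x ∈ e₂, (G.deleteEdges {e | e ∈ C.edges}).Reachable w x) :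
    ∀ (a b : V) (q : G.Walk a b), q.IsPath → q.length = G.dist a b →
      ¬(s(u, v) ∈ q.edges ∧ e₂ ∈ q.edges) := by
  classical
  rintro a b q - hq ⟨huvq, he₂q⟩
  have huw : u ≠ w := by
    rintro rfl
    rw [dist_self, dist_eq_one_iff_adj.mpr (C.adj_of_mem_edges huv)] at hwdist
    exact zero_ne_one hwdist
  have hx := e₂.out_fst_mem
  have hxq := q.mem_support_of_mem_edges he₂q hx
  have huq := q.fst_mem_support_of_mem_edges huvq
  have hwq : w ∈ q.support := by
    have hwP := hcactus.mem_support_of_reachable_deleteEdges hC hw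
      (C.fst_mem_support_of_mem_edges huv) huw (hend _ hx)
      ((q.takeUntil _ hxq).reverse.append (q.takeUntil u huq))
    rw [Walk.mem_support_append_iff, Walk.support_reverse, List.mem_reverse] at hwP
    exact hwP.elim (q.support_takeUntil_subset_support hxq ·)
      (q.support_takeUntil_subset_support huq ·)
  exact q.dist_ne_dist_of_length_eq_dist hq hwq huvq hwdist

theorem stmt_19 {V : Type*} [Fintype V] (G : SimpleGraph V)
    (hconn : G.Connected) (hcactus : IsCactus G)
    (w₀ : V) (C : G.Walk w₀ w₀) (hC : C.IsCycle) (hodd : Odd C.length)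
    (u v : V) (huv : s(u, v) ∈ C.edges)
    (w : V) (hw : w ∈ C.support) (hwdist : G.dist w u = G.dist w v)
    (e₂ : Sym2 V) (he₂ : e₂ ∈ G.edgeSet)
    (hend : ∀ x ∈ e₂, (G.deleteEdges {e | e ∈ C.edges}).Reachable w x) :
    ∀ (a b : V) (q : G.Walk a b), q.IsPath → q.length = G.dist a b →
      ¬(s(u, v) ∈ q.edges ∧ e₂ ∈ q.edges) :=
  stmt_19_general G hcactus w₀ C hC u v huv w hw hwdist e₂ hend
end
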